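/- Let d ≥ 1, 1 < p ≤ ∞, and let q satisfy max{((d+2)/d)·p', 2(d+1)/d} < q ≤ ∞; assume the extension conjecture holds on a neighborhood of (p, q). Let (f_n) be a bounded sequence in L^p(S^d, σ), and for M > 0 set E_n^M := {ω ∈ S^d : |f_n(ω)| > M}. Then lim_{M→∞} sup_n sup { ‖E (f_n χ_E)‖_{L^q(ℝ^{d+1})} : E ⊆ E_n^M measurable } = 0. -/

import Mathlib

/-! The hypotheses on `(p, q)` are strict and the extension conjecture is assumed on a
neighbourhood, so for `p < ∞` the extension operator is bounded `L^r → L^q` for some `r < p`.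
On `E ⊆ {|f_n| > M}` one has `|f_n|^r ≤ M^{r-p} |f_n|^p`, hence
`‖f_n χ_E‖_r ≤ (M^{r-p} C^p)^{1/r}`, which tends to `0` uniformly in `n` and `E`.
For `p = ∞` the sets `{|f_n| > M}` are null as soon as `M` exceeds the uniform bound `C`. -/

open MeasureTheory Filter Topology
open scoped ENNReal NNReal

noncomputable section

abbrev ES (n : ℕ) : Type := EuclideanSpace ℝ (Fin n)

/-- surface measure on the unit sphere `S^d ⊂ ℝ^{d+1}`:
`d`-dimensional Hausdorff measure restricted to the sphere -/
def sphM (d : ℕ) : Measure (ES (d + 1)) :=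
  (μH[(d : ℝ)]).restrict (Metric.sphere (0 : ES (d + 1)) 1)

/-- the spherical extension (adjoint restriction) operator -/
def sphExt (d : ℕ) (f : ES (d + 1) → ℂ) (x : ES (d + 1)) : ℂ :=
  ∫ ω, Complex.exp (Complex.I * ((inner ℝ x ω : ℝ) : ℂ)) * f ω ∂(sphM d)

/-- the operator norm `S_{p→q}` of the spherical extension operator -/
def Spq (d : ℕ) (p q : ℝ≥0∞) : ℝ≥0∞ :=
  sSup {c : ℝ≥0∞ | ∃ f : ES (d + 1) → ℂ, MemLp f p (sphM d) ∧ Integrable f (sphM d) ∧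
    eLpNorm f p (sphM d) ≠ 0 ∧ c = eLpNorm (sphExt d f) q volume / eLpNorm f p (sphM d)}

/-- dual (conjugate) exponent in `ℝ≥0∞` -/
def dualE (p : ℝ≥0∞) : ℝ≥0∞ := (1 - 1 / p)⁻¹

/-- the extension conjecture holds at the exponent pair `(r, s)` -/
def ExtConjAt (d : ℕ) (r s : ℝ≥0∞) : Prop :=
  Spq d r s < ⊤ ∨ s ≤ 2 * ((d : ℝ≥0∞) + 1) / d ∨ s < ((d : ℝ≥0∞) + 2) / d * dualE r

/-- the extension conjecture holds on a neighborhood of `(p, q)` -/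
def ExtConjNear (d : ℕ) (p q : ℝ≥0∞) : Prop :=
  ∃ ε > (0 : ℝ), ∀ r s : ℝ≥0∞, 1 ≤ r → 1 ≤ s →
    |(1 / r).toReal - (1 / p).toReal| < ε → |(1 / s).toReal - (1 / q).toReal| < ε →
    ExtConjAt d r s

/-- the point `(a, v) ∈ ℝ^{1+d}` -/
def buildPt (d : ℕ) (a : ℝ) (v : ES d) : ES (d + 1) := WithLp.toLp 2 (Fin.cons a (fun j => v j))

/-- `ω' ∈ ℝ^d`, the last `d` coordinates of `ω ∈ ℝ^{1+d}` -/
def primePart (d : ℕ) (ω : ES (d + 1)) : ES d := WithLp.toLp 2 (fun i : Fin d => ω i.succ)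

/-- flip the sign of the first coordinate -/
def negFirst (d : ℕ) (x : ES (d + 1)) : ES (d + 1) := buildPt d (-(x 0)) (primePart d x)

/-- distance in projective space: `dist([ω],[ω'])` -/
def pdist (d : ℕ) (ω ω' : ES (d + 1)) : ℝ := min ‖ω - ω'‖ ‖ω + ω'‖

/-- the first standard basis vector -/
def e1 (d : ℕ) : ES (d + 1) := EuclideanSpace.single 0 1

/-- the parabolic extension operator (defined by the integral formula, for integrable `φ`) -/
def parabExt (d : ℕ) (φ : ES d → ℂ) (x : ES (d + 1)) : ℂ :=
  ∫ ξ, Complex.exp (Complex.I *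
    ((x 0 * (‖ξ‖ ^ 2 / 2) + ∑ i, primePart d x i * ξ i : ℝ) : ℂ)) * φ ξ

/-- the operator norm `P_{p→q}` of the parabolic extension operator -/
def Ppq (d : ℕ) (p q : ℝ≥0∞) : ℝ≥0∞ :=
  sSup {c : ℝ≥0∞ | ∃ φ : ES d → ℂ, MemLp φ p volume ∧ Integrable φ volume ∧
    eLpNorm φ p volume ≠ 0 ∧ c = eLpNorm (parabExt d φ) q volume / eLpNorm φ p volume}

/-- `F` is the value at `φ ∈ L^p` of the continuous `L^p → L^q` extension of
the parabolic extension operator -/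
def HasParabExt (d : ℕ) (p q : ℝ≥0∞) (φ : ES d → ℂ) (F : ES (d + 1) → ℂ) : Prop :=
  ∃ φk : ℕ → ES d → ℂ,
    (∀ k, MemLp (φk k) p volume ∧ Integrable (φk k) volume) ∧
    Tendsto (fun k => eLpNorm (φk k - φ) p volume) atTop (𝓝 0) ∧
    Tendsto (fun k => eLpNorm (parabExt d (φk k) - F) q volume) atTop (𝓝 0)

/-- the function maximized in the definition of `α_{p,q}` -/
def alphaFn (p q t : ℝ) : ℝ :=
  ((1 / (2 * Real.pi)) * ∫ θ in (0 : ℝ)..(2 * Real.pi),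
      ‖1 + (t : ℂ) * Complex.exp ((θ : ℂ) * Complex.I)‖ ^ q) ^ (1 / q) /
    (1 + t ^ p) ^ (1 / p)

/-- the constant `α_{p,q}` -/
def alphaC (p q : ℝ) : ℝ := sSup (alphaFn p q '' Set.Icc 0 1)

/-- the constant `β_{p,q}` -/
def betaC (p q : ℝ) : ℝ :=
  2 ^ (1 / (max p 2 / (max p 2 - 1))) *
    (Real.Gamma ((q + 1) / 2) / (Real.sqrt Real.pi * Real.Gamma ((q + 2) / 2))) ^ (1 / q)

/-- weak convergence in `L^p`: tested against all `g ∈ L^{p'}` -/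
def WeakLp {α : Type*} [MeasurableSpace α] (μ : Measure α) (p : ℝ≥0∞)
    (h : ℕ → α → ℂ) (h₀ : α → ℂ) : Prop :=
  ∀ g : α → ℂ, MemLp g (dualE p) μ →
    Tendsto (fun n => ∫ a, h n a * g a ∂μ) atTop (𝓝 (∫ a, h₀ a * g a ∂μ))

/-- modulation `e^{-i⟨x,ω⟩} f(ω)` -/
def modNeg (d : ℕ) (x : ES (d + 1)) (f : ES (d + 1) → ℂ) : ES (d + 1) → ℂ :=
  fun ω => Complex.exp (-(Complex.I * ((inner ℝ x ω : ℝ) : ℂ))) * f ω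

/-- modulation `e^{i⟨x,ω⟩} f(ω)` -/
def modPos (d : ℕ) (x : ES (d + 1)) (f : ES (d + 1) → ℂ) : ES (d + 1) → ℂ :=
  fun ω => Complex.exp (Complex.I * ((inner ℝ x ω : ℝ) : ℂ)) * f ω

/-- the concentrating profile `λ^{-d/p}(φ⁺(ω'/λ)χ_{ω₁>1/2} + φ⁻(ω'/λ)χ_{-ω₁>1/2})` -/
def profileHalf (d : ℕ) (p lam : ℝ) (φp φm : ES d → ℂ) : ES (d + 1) → ℂ :=
  fun ω => ((lam ^ (-(d : ℝ) / p) : ℝ) : ℂ) *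
    ((if (1 / 2 : ℝ) < ω 0 then φp (lam⁻¹ • primePart d ω) else 0) +
     (if (1 / 2 : ℝ) < -(ω 0) then φm (lam⁻¹ • primePart d ω) else 0))

/-- the concentrating profile
`λ^{-d/p}(φ⁺(ω'/λ)χ_{ω₁>0} + φ⁻(ω'/λ)χ_{ω₁<0})χ_{|ω'|<1/2}` -/
def profileZero (d : ℕ) (p lam : ℝ) (φp φm : ES d → ℂ) : ES (d + 1) → ℂ :=
  fun ω => ((lam ^ (-(d : ℝ) / p) : ℝ) : ℂ) *
    ((if (0 : ℝ) < ω 0 then φp (lam⁻¹ • primePart d ω) else 0) +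
     (if ω 0 < (0 : ℝ) then φm (lam⁻¹ • primePart d ω) else 0)) *
    (if ‖primePart d ω‖ < 1 / 2 then 1 else 0)

/-- the rescaled and modulated restriction of `f` to the upper (`s = 1`) or lower
(`s = -1`) hemisphere, in parabolic coordinates:
`ξ ↦ λ^{d/p} e^{-i⟨x, (s√(1-|λξ|²), λξ)⟩} f(s√(1-|λξ|²), λξ) χ_{|ξ|<1/(2λ)}` -/
def chartFn (d : ℕ) (p s lam : ℝ) (x : ES (d + 1)) (f : ES (d + 1) → ℂ) : ES d → ℂ :=
  fun ξ =>
    if ‖ξ‖ < 1 / (2 * lam) then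
      ((lam ^ ((d : ℝ) / p) : ℝ) : ℂ) *
        Complex.exp (-(Complex.I *
          ((inner ℝ x (buildPt d (s * Real.sqrt (1 - ‖lam • ξ‖ ^ 2)) (lam • ξ)) : ℝ) : ℂ))) *
        f (buildPt d (s * Real.sqrt (1 - ‖lam • ξ‖ ^ 2)) (lam • ξ))
    else 0


lemma ENNReal.rpow_le_ofReal_rpow_sub_mul_rpow {x : ℝ≥0∞} {M b p : ℝ} (hM : 0 < M)
    (hMx : ENNReal.ofReal M < x) (hb : 0 ≤ b) (hbp : b ≤ p) (hx : x ≠ ⊤) :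
    x ^ b ≤ ENNReal.ofReal (M ^ (b - p)) * x ^ p := by
  lift x to ℝ≥0 using hx
  have hMx' : M < x := by simpa using (ENNReal.ofReal_lt_iff_lt_toReal hM.le coe_ne_top).1 hMx
  have hx0 : (0 : ℝ) < x := hM.trans hMx'
  have key : (x : ℝ) ^ b ≤ M ^ (b - p) * (x : ℝ) ^ p :=
    calc (x : ℝ) ^ b = (x : ℝ) ^ (b - p) * (x : ℝ) ^ p := by
          rw [← Real.rpow_add hx0, sub_add_cancel]
      _ ≤ M ^ (b - p) * (x : ℝ) ^ p := by
          gcongr ?_ * _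
          exact Real.rpow_le_rpow_of_nonpos hM hMx'.le (by linarith)
  rw [← ofReal_coe_nnreal, ofReal_rpow_of_nonneg hx0.le hb,
    ofReal_rpow_of_nonneg hx0.le (hb.trans hbp), ← ENNReal.ofReal_mul (by positivity)]
  exact ENNReal.ofReal_le_ofReal key

lemma eLpNorm_indicator_rpow_le_of_subset_norm_gt {α F : Type*} [MeasurableSpace α]
    [NormedAddCommGroup F] {μ : Measure α} {f : α → F} {s : Set α} {M : ℝ} {r p : ℝ≥0∞}
    (hM : 0 < M) (hr : r ≠ 0) (hrp : r ≤ p) (hp : p ≠ ⊤) (hs : s ⊆ {x | M < ‖f x‖}) :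
    eLpNorm (s.indicator f) r μ ^ r.toReal ≤
      ENNReal.ofReal (M ^ (r.toReal - p.toReal)) * eLpNorm f p μ ^ p.toReal := by
  have hr_top : r ≠ ⊤ := ne_top_of_le_ne_top hp hrp
  have hp0 : p ≠ 0 := (pos_iff_ne_zero.2 hr |>.trans_le hrp).ne'
  have hr_pos : 0 < r.toReal := ENNReal.toReal_pos hr hr_top
  have hrp' : r.toReal ≤ p.toReal := ENNReal.toReal_mono hp hrp
  rw [eLpNorm_eq_eLpNorm' hr hr_top, eLpNorm_eq_eLpNorm' hp0 hp,
    ← lintegral_rpow_enorm_eq_rpow_eLpNorm' hr_pos,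
    ← lintegral_rpow_enorm_eq_rpow_eLpNorm' (hr_pos.trans_le hrp'),
    ← lintegral_const_mul' _ _ ENNReal.ofReal_ne_top]
  refine lintegral_mono fun x => ?_
  by_cases hx : x ∈ s
  · rw [Set.indicator_of_mem hx]
    refine ENNReal.rpow_le_ofReal_rpow_sub_mul_rpow hM ?_ hr_pos.le hrp' enorm_ne_top
    rw [← ofReal_norm]
    exact ENNReal.ofReal_lt_ofReal_iff'.2 ⟨hs hx, hM.trans (hs hx)⟩
  · simp [Set.indicator_of_notMem hx, ENNReal.zero_rpow_of_pos hr_pos]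

lemma ENNReal.tendsto_const_mul_ofReal_rpow_mul_const_rpow_atTop_zero {a c : ℝ} {S K : ℝ≥0∞}
    (ha : a < 0) (hc : 0 < c) (hS : S ≠ ⊤) (hK : K ≠ ⊤) :
    Tendsto (fun M : ℝ => S * (ENNReal.ofReal (M ^ a) * K) ^ c) atTop (𝓝 0) := by
  have hpow : Tendsto (fun M : ℝ => ENNReal.ofReal (M ^ a)) atTop (𝓝 0) := by
    rw [← neg_neg a, ← ENNReal.ofReal_zero]
    exact ENNReal.tendsto_ofReal (tendsto_rpow_neg_atTop (neg_pos.2 ha))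
  have hbase : Tendsto (fun M : ℝ => ENNReal.ofReal (M ^ a) * K) atTop (𝓝 0) := by
    simpa using ENNReal.Tendsto.mul_const hpow (Or.inr hK)
  have hroot := ((ENNReal.continuous_rpow_const (y := c)).tendsto 0).comp hbase
  rw [ENNReal.zero_rpow_of_pos hc] at hroot
  simpa using ENNReal.Tendsto.const_mul hroot (Or.inr hS)

lemma sphExt_congr_ae {d : ℕ} {f g : ES (d + 1) → ℂ} (h : f =ᵐ[sphM d] g) :
    sphExt d f = sphExt d g :=
  funext fun _ => integral_congr_ae <| h.mono fun _ hω => by simp only [hω]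

lemma sphExt_zero (d : ℕ) : sphExt d 0 = 0 := by
  ext x
  simp [sphExt]

lemma eLpNorm_sphExt_le {d : ℕ} {r q : ℝ≥0∞} (hr : r ≠ 0) {f : ES (d + 1) → ℂ}
    (hf : MemLp f r (sphM d)) (hfi : Integrable f (sphM d)) :
    eLpNorm (sphExt d f) q volume ≤ Spq d r q * eLpNorm f r (sphM d) := by
  by_cases h0 : eLpNorm f r (sphM d) = 0
  · rw [sphExt_congr_ae ((eLpNorm_eq_zero_iff hf.1 hr).1 h0), sphExt_zero]
    simp
  · rw [← ENNReal.div_le_iff h0 hf.2.ne]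
    exact le_sSup ⟨f, hf, hfi, h0, rfl⟩

lemma sphExt_indicator_eq_zero_of_eLpNorm_top_le {d : ℕ} {f : ES (d + 1) → ℂ}
    {E : Set (ES (d + 1))} {M : ℝ} (hM : 0 ≤ M) (hf : eLpNorm f ⊤ (sphM d) ≤ ENNReal.ofReal M)
    (hE : E ⊆ {ω | M < ‖f ω‖}) :
    sphExt d (E.indicator f) = 0 := by
  have hnull : sphM d {ω | M < ‖f ω‖} = 0 := by
    refine measure_mono_null (fun ω (hω : M < ‖f ω‖) => ?_)
      (ae_iff.1 (ae_le_eLpNormEssSup (f := f)))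
    rw [Set.mem_ofPred_eq, not_le, ← ofReal_norm, ← eLpNorm_exponent_top]
    exact hf.trans_lt (ENNReal.ofReal_lt_ofReal_iff'.2 ⟨hω, hM.trans_lt hω⟩)
  rw [sphExt_congr_ae (indicator_meas_zero (measure_mono_null hE hnull)), sphExt_zero]

lemma continuous_dualE : Continuous dualE := by
  have h : dualE = fun p => (1 - p⁻¹)⁻¹ := funext fun p => by rw [dualE, one_div]
  rw [h]
  exact continuous_inv.comp
    ((ENNReal.continuous_sub_left ENNReal.one_ne_top).comp continuous_inv)

lemma one_le_two_mul_add_one_div (d : ℕ) : 1 ≤ 2 * ((d : ℝ≥0∞) + 1) / d := by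
  rw [ENNReal.le_div_iff_mul_le (Or.inr (by simp)) (Or.inl (ENNReal.natCast_ne_top d)), one_mul]
  calc (d : ℝ≥0∞) ≤ d + 1 := le_self_add
    _ ≤ 2 * (d + 1) := le_mul_of_one_le_left zero_le one_le_two

lemma ExtConjAt.Spq_lt_top {d : ℕ} {r s : ℝ≥0∞} (h : ExtConjAt d r s)
    (hs2 : 2 * ((d : ℝ≥0∞) + 1) / d < s) (hs1 : ((d : ℝ≥0∞) + 2) / d * dualE r ≤ s) :
    Spq d r s < ⊤ :=
  h.resolve_right (by simp only [not_or, not_le, not_lt]; exact ⟨hs2, hs1⟩)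

lemma ExtConjNear.exists_lt_Spq_lt_top {d : ℕ} {p q : ℝ≥0∞} (h : ExtConjNear d p q)
    (hp : 1 < p) (hp_top : p ≠ ⊤) (hq1 : ((d : ℝ≥0∞) + 2) / d * dualE p < q)
    (hq2 : 2 * ((d : ℝ≥0∞) + 1) / d < q) :
    ∃ r, 1 ≤ r ∧ r < p ∧ Spq d r q < ⊤ := by
  obtain ⟨ε, hε, hnear⟩ := h
  set P := p.toReal
  have hP : ENNReal.ofReal P = p := ENNReal.ofReal_toReal hp_top
  have hP1 : 1 < P := by simpa [P] using ENNReal.toReal_strict_mono hp_top hp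
  have hofReal : Tendsto ENNReal.ofReal (𝓝[<] P) (𝓝 p) :=
    hP ▸ (ENNReal.continuous_ofReal.tendsto P).mono_left nhdsWithin_le_nhds
  have hdual : Tendsto (fun r => ((d : ℝ≥0∞) + 2) / d * dualE (ENNReal.ofReal r)) (𝓝[<] P)
      (𝓝 (((d : ℝ≥0∞) + 2) / d * dualE p)) :=
    ENNReal.Tendsto.const_mul ((continuous_dualE.tendsto p).comp hofReal)
      (Or.inl (ENNReal.inv_ne_zero.2 (ne_top_of_le_ne_top ENNReal.one_ne_top tsub_le_self)))
  have hinv : Tendsto (fun r => (1 / ENNReal.ofReal r).toReal) (𝓝[<] P) (𝓝 (1 / p).toReal) := by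
    refine (ENNReal.tendsto_toReal ?_).comp ?_
    · simpa using (zero_lt_one.trans hp).ne'
    · simp only [one_div]
      exact (continuous_inv.tendsto p).comp hofReal
  obtain ⟨r, hr1, hrP, hrε, hrq⟩ : ∃ r : ℝ, 1 < r ∧ r < P ∧
      |(1 / ENNReal.ofReal r).toReal - (1 / p).toReal| < ε ∧
      ((d : ℝ≥0∞) + 2) / d * dualE (ENNReal.ofReal r) < q :=
    (((eventually_gt_nhds hP1).filter_mono nhdsWithin_le_nhds).and (eventually_mem_nhdsWithin.and
      ((hinv.eventually (Metric.ball_mem_nhds _ hε)).and (hdual.eventually_lt_const hq1)))).exists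
  have hq : 1 ≤ q := (one_le_two_mul_add_one_div d).trans hq2.le
  refine ⟨ENNReal.ofReal r, ?_, hP ▸ (ENNReal.ofReal_lt_ofReal_iff (by linarith)).2 hrP, ?_⟩
  · simpa using hr1.le
  · exact (hnear _ q (by simpa using hr1.le) hq hrε (by simpa using hε)).Spq_lt_top hq2 hrq.le

lemma eLpNorm_sphExt_indicator_le {d : ℕ} {f : ES (d + 1) → ℂ} {E : Set (ES (d + 1))}
    {M : ℝ} {r p q C : ℝ≥0∞} (hr : 1 ≤ r) (hrp : r ≤ p) (hp : p ≠ ⊤)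
    (hf : AEStronglyMeasurable f (sphM d)) (hfC : eLpNorm f p (sphM d) ≤ C) (hC : C ≠ ⊤)
    (hM : 0 < M) (hE : MeasurableSet E) (hEf : E ⊆ {ω | M < ‖f ω‖}) :
    eLpNorm (sphExt d (E.indicator f)) q volume ≤
      Spq d r q * (ENNReal.ofReal (M ^ (r.toReal - p.toReal)) * C ^ p.toReal) ^ r.toReal⁻¹ := by
  have hr0 : r ≠ 0 := (zero_lt_one.trans_le hr).ne'
  have hCp : C ^ p.toReal ≠ ⊤ := ENNReal.rpow_ne_top_of_nonneg ENNReal.toReal_nonneg hC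
  have htail : ∀ b : ℝ≥0∞, b ≠ 0 → b ≤ p → eLpNorm (E.indicator f) b (sphM d) ^ b.toReal ≤
      ENNReal.ofReal (M ^ (b.toReal - p.toReal)) * C ^ p.toReal := fun b hb hbp =>
    (eLpNorm_indicator_rpow_le_of_subset_norm_gt hM hb hbp hp hEf).trans (by gcongr)
  have hmeas : AEStronglyMeasurable (E.indicator f) (sphM d) := hf.indicator hE
  have hint : Integrable (E.indicator f) (sphM d) := by
    refine memLp_one_iff_integrable.1 ⟨hmeas, ?_⟩
    simpa using (htail 1 one_ne_zero (hr.trans hrp)).trans_lt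
      (ENNReal.mul_lt_top ENNReal.ofReal_lt_top hCp.lt_top)
  have hnorm : eLpNorm (E.indicator f) r (sphM d) ≤
      (ENNReal.ofReal (M ^ (r.toReal - p.toReal)) * C ^ p.toReal) ^ r.toReal⁻¹ :=
    (ENNReal.le_rpow_inv_iff (ENNReal.toReal_pos hr0 (ne_top_of_le_ne_top hp hrp))).2
      (htail r hr0 hrp)
  have hmem : MemLp (E.indicator f) r (sphM d) := ⟨hmeas, hnorm.trans_lt
    (ENNReal.rpow_lt_top_of_nonneg (by positivity) (ENNReal.mul_ne_top ENNReal.ofReal_ne_top hCp))⟩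
  calc eLpNorm (sphExt d (E.indicator f)) q volume
      ≤ Spq d r q * eLpNorm (E.indicator f) r (sphM d) := eLpNorm_sphExt_le hr0 hmem hint
    _ ≤ _ := by gcongr

theorem subcritical_large_values_negligible_general
    (d : ℕ) (p q : ℝ≥0∞) (hp : 1 < p)
    (hq1 : ((d : ℝ≥0∞) + 2) / d * dualE p < q)
    (hq2 : 2 * ((d : ℝ≥0∞) + 1) / d < q)
    (hconj : ExtConjNear d p q)
    (f : ℕ → ES (d + 1) → ℂ)
    (hfmem : ∀ n, MemLp (f n) p (sphM d))
    (hfbd : ∃ C : ℝ≥0∞, C < ⊤ ∧ ∀ n, eLpNorm (f n) p (sphM d) ≤ C) :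
    Tendsto (fun M : ℝ =>
      ⨆ n, ⨆ (E : Set (ES (d + 1)))
        (_ : MeasurableSet E ∧ E ⊆ {ω | M < ‖f n ω‖}),
        eLpNorm (sphExt d (E.indicator (f n))) q volume) atTop (𝓝 0) := by
  obtain ⟨C, hC, hfC⟩ := hfbd
  rcases eq_or_ne p ⊤ with rfl | hp_top
  · refine tendsto_const_nhds.congr' ?_
    filter_upwards [eventually_ge_atTop C.toReal] with M hM
    have hM0 : 0 ≤ M := ENNReal.toReal_nonneg.trans hM
    have hCM : C ≤ ENNReal.ofReal M := (ENNReal.le_ofReal_iff_toReal_le hC.ne hM0).2 hM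
    refine (ENNReal.iSup_eq_zero.2 fun n => ENNReal.iSup_eq_zero.2 fun E =>
      ENNReal.iSup_eq_zero.2 fun hE => ?_).symm
    rw [sphExt_indicator_eq_zero_of_eLpNorm_top_le hM0 ((hfC n).trans hCM) hE.2]
    simp
  obtain ⟨r, hr1, hrp, hS⟩ := hconj.exists_lt_Spq_lt_top hp hp_top hq1 hq2
  have hdecay := ENNReal.tendsto_const_mul_ofReal_rpow_mul_const_rpow_atTop_zero
    (sub_neg.2 (ENNReal.toReal_strict_mono hp_top hrp))
    (inv_pos.2 (ENNReal.toReal_pos (zero_lt_one.trans_le hr1).ne' hrp.ne_top)) hS.ne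
    (ENNReal.rpow_ne_top_of_nonneg (ENNReal.toReal_nonneg (a := p)) hC.ne)
  refine tendsto_of_tendsto_of_tendsto_of_le_of_le' tendsto_const_nhds hdecay
    (Eventually.of_forall fun _ => zero_le) ?_
  filter_upwards [eventually_gt_atTop 0] with M hM
  exact iSup_le fun n => iSup₂_le fun E hE => eLpNorm_sphExt_indicator_le hr1 hrp.le hp_top
    (hfmem n).1 (hfC n) hC.ne hM hE.1 hE.2

/-- Subcritical regime: extensions of pieces supported where `|f_n| > M`
are uniformly small as `M → ∞`. -/
theorem subcritical_large_values_negligible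
    (d : ℕ) (hd : 1 ≤ d) (p q : ℝ≥0∞) (hp : 1 < p)
    (hq1 : ((d : ℝ≥0∞) + 2) / d * dualE p < q)
    (hq2 : 2 * ((d : ℝ≥0∞) + 1) / d < q)
    (hconj : ExtConjNear d p q)
    (f : ℕ → ES (d + 1) → ℂ)
    (hfmem : ∀ n, MemLp (f n) p (sphM d))
    (hfbd : ∃ C : ℝ≥0∞, C < ⊤ ∧ ∀ n, eLpNorm (f n) p (sphM d) ≤ C) :
    Tendsto (fun M : ℝ =>
      ⨆ n, ⨆ (E : Set (ES (d + 1)))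
        (_ : MeasurableSet E ∧ E ⊆ {ω | M < ‖f n ω‖}),
        eLpNorm (sphExt d (E.indicator (f n))) q volume) atTop (𝓝 0) :=
  subcritical_large_values_negligible_general d p q hp hq1 hq2 hconj f hfmem hfbd

end
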